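/- arXiv:2309.00967 — 2 statements merged into one kernel-verified Lean document; each statement's English description precedes it below -/
import Mathlib

section
/- The real Okubo algebra 𝒪 is a division algebra: for x, y ∈ 𝒪, if x*y = 0 then x = 0 or y = 0. -/
open Matrix Complex

noncomputable section

/-- `3 × 3` complex matrices. -/
abbrev M3 : Type := Matrix (Fin 3) (Fin 3) ℂ

/-- The real Okubo algebra: `3 × 3` traceless Hermitian complex matrices. -/
def Okubo : Set M3 := {x | x.IsHermitian ∧ x.trace = 0}

/-- The constant `μ = (3 + i√3)/6`. -/
def okMu : ℂ := (3 + (Real.sqrt 3 : ℂ) * Complex.I) / 6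

/-- The Okubo product `x*y = μ·(xy) + μ̄·(yx) − (1/3)Tr(xy)·Id`. -/
def omul (x y : M3) : M3 :=
  okMu • (x * y) + (starRingEnd ℂ) okMu • (y * x) - ((1 / 3 : ℂ) * (x * y).trace) • (1 : M3)

/-- The Okubic norm `n(x) = (1/6)Tr(x²)` (real-valued on Hermitian matrices). -/
def onorm (x : M3) : ℝ := (1 / 6) * ((x * x).trace).re

/-- The polar form `⟨x,y⟩ = n(x+y) − n(x) − n(y)` of the Okubic norm. -/
def opolar (x y : M3) : ℝ := onorm (x + y) - onorm x - onorm y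

/-!
For traceless `x, y`, the constants `μ + μ̄ = 1` and `μμ̄ = 1/3` together with a trace identity
valid for all traceless `3 × 3` matrices give `6 Tr((x*y)²) = Tr(x²) Tr(y²)`, i.e. the norm is
multiplicative: `n(x*y) = n(x) n(y)`. On Hermitian matrices `Tr(x²) = Tr(xᴴx)` vanishes only at
`x = 0`, so `x*y = 0` forces `x = 0` or `y = 0`.
-/

open scoped ComplexOrder

theorem Matrix.trace_fin_three_mul_mul_of_trace_eq_zero {R : Type*} [CommRing R]
    {A B : Matrix (Fin 3) (Fin 3) R} (hA : A.trace = 0) (hB : B.trace = 0) :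
    2 * (A * B * (A * B)).trace + 4 * (A * A * (B * B)).trace =
      (A * A).trace * (B * B).trace + 2 * (A * B).trace ^ 2 := by
  simp only [trace, diag, mul_apply, Fin.sum_univ_three] at *
  rw [show A 2 2 = -A 0 0 - A 1 1 by linear_combination hA,
    show B 2 2 = -B 0 0 - B 1 1 by linear_combination hB]
  ring

theorem Matrix.IsHermitian.eq_zero_of_trace_mul_self_eq_zero {n R : Type*} [Fintype n]
    [PartialOrder R] [Ring R] [StarRing R] [StarOrderedRing R] [NoZeroDivisors R]
    {A : Matrix n n R} (hA : A.IsHermitian) (h : (A * A).trace = 0) : A = 0 :=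
  trace_conjTranspose_mul_self_eq_zero_iff.mp (by rwa [hA.eq])

lemma conj_okMu : starRingEnd ℂ okMu = (3 - (Real.sqrt 3 : ℂ) * I) / 6 := by
  simp only [okMu, map_div₀, map_add, map_mul, conj_I, conj_ofReal, map_ofNat]
  ring

lemma okMu_add_conj : okMu + starRingEnd ℂ okMu = 1 := by
  rw [conj_okMu, okMu]
  ring

lemma okMu_mul_conj : okMu * starRingEnd ℂ okMu = 1 / 3 := by
  have h3 : (Real.sqrt 3 : ℂ) ^ 2 = 3 := by norm_cast; simp
  rw [conj_okMu, okMu]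
  linear_combination (-I ^ 2 / 36) * h3 + (-1 / 12 : ℂ) * I_sq

theorem trace_omul_mul_self {x y : M3} (hx : x.trace = 0) (hy : y.trace = 0) :
    6 * (omul x y * omul x y).trace = (x * x).trace * (y * y).trace := by
  have hyxyx : (y * x * (y * x)).trace = (x * y * (x * y)).trace := by
    simp only [← mul_assoc]; rw [trace_mul_comm, ← mul_assoc, ← mul_assoc]
  have hxyyx : (x * y * (y * x)).trace = (x * x * (y * y)).trace := by
    simp only [← mul_assoc]; rw [trace_mul_comm, ← mul_assoc, ← mul_assoc]
  have hyxxy : (y * x * (x * y)).trace = (x * x * (y * y)).trace := by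
    rw [trace_mul_comm (x * x), ← mul_assoc, trace_mul_comm, ← mul_assoc, ← mul_assoc,
      ← mul_assoc]
  simp only [omul, add_mul, mul_add, sub_mul, mul_sub, smul_mul_assoc, mul_smul_comm, one_mul,
    mul_one, trace_add, trace_sub, trace_smul, trace_one, smul_eq_mul, Fintype.card_fin,
    Nat.cast_ofNat, hyxyx, hxyyx, hyxxy, trace_mul_comm y x]
  -- `μ² + μ̄² = (μ + μ̄)² - 2μμ̄ = 1/3` reduces the expansion to `(P + 2Q - Tr(xy)²)/3`,
  -- with `P = Tr(xyxy)` and `Q = Tr(xxyy)`.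
  linear_combination
    (6 * (x * y * (x * y)).trace * (okMu + starRingEnd ℂ okMu + 1) - 4 * (x * y).trace ^ 2)
      * okMu_add_conj
    + (12 * (x * x * (y * y)).trace - 12 * (x * y * (x * y)).trace) * okMu_mul_conj
    + trace_fin_three_mul_mul_of_trace_eq_zero hx hy

/-- The real Okubo algebra is a division algebra:
if `x*y = 0` then `x = 0` or `y = 0`. -/
theorem okubo_paper_stmt7 :
    ∀ x ∈ Okubo, ∀ y ∈ Okubo, omul x y = 0 → x = 0 ∨ y = 0 := by
  intro x hx y hy hxy
  have hnorm := trace_omul_mul_self hx.2 hy.2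
  rw [hxy, zero_mul, trace_zero, mul_zero, eq_comm, mul_eq_zero] at hnorm
  exact hnorm.imp hx.1.eq_zero_of_trace_mul_self_eq_zero hy.1.eq_zero_of_trace_mul_self_eq_zero

end
end

section
/- For every x, y in the real Okubo algebra 𝒪, the vector (x, y, x*y; n(y), n(x), 1) ∈ 𝒪³×ℝ³ is a Veronese vector, i.e. it satisfies n(y)·x = y*(x*y), n(x)·y = (x*y)*x, 1·(x*y) = x*y, n(x) = n(x)·1, n(y) = 1·n(y), and n(x*y) = n(y)·n(x). -/
/-!
Write the product as `m xy + (1 - m) yx - (1/3) tr(xy)` with `m = μ`; all that matters about `m` is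
`3m² - 3m + 1 = 0`, i.e. `m (1 - m) = m² + (1 - m)² = 1/3`. Expanding with this, `y * (x * y) = n(y) x`
becomes the linearized Cayley–Hamilton identity
`y(xy) + y(yx) + xy² = tr(xy) y + ½ tr(y²) x + tr(xy²)` for traceless `3 × 3` matrices, and
`n(x * y) = n(x) n(y)` becomes its trace against `x`. Replacing `m` by the other root `1 - m = μ̄`
swaps the factors of the product, so `(x * y) * x = n(x) y` is the first identity for that root.
-/

open Matrix Complex

noncomputable section

/-- `(x₁,x₂,x₃;λ₁,λ₂,λ₃) ∈ 𝒪³×ℝ³` is a Veronese vector. -/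
def IsVeronese (x₁ x₂ x₃ : M3) (l₁ l₂ l₃ : ℝ) : Prop :=
  l₁ • x₁ = omul x₂ x₃ ∧ l₂ • x₂ = omul x₃ x₁ ∧ l₃ • x₃ = omul x₁ x₂ ∧
  onorm x₁ = l₂ * l₃ ∧ onorm x₂ = l₃ * l₁ ∧ onorm x₃ = l₁ * l₂

section LinearizedCayleyHamilton

variable {R : Type*} [CommRing R]

lemma trace_fin_three_eq_zero_iff (x : Matrix (Fin 3) (Fin 3) R) :
    trace x = 0 ↔ x 2 2 = -(x 0 0 + x 1 1) := by
  rw [trace_fin_three]; constructor <;> intro h <;> linear_combination h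

theorem linearized_cayleyHamilton (x y : Matrix (Fin 3) (Fin 3) R)
    (hx : trace x = 0) (hy : trace y = 0) :
    (2 : R) • (y * (x * y) + y * (y * x) + x * (y * y)) =
      (2 * trace (x * y)) • y + trace (y * y) • x + (2 * trace (x * (y * y))) • 1 := by
  rw [trace_fin_three_eq_zero_iff] at hx hy
  ext i j
  fin_cases i <;> fin_cases j <;>
    simp only [Fin.zero_eta, Fin.mk_one, Fin.reduceFinMk, Fin.isValue, Matrix.smul_apply,
      Matrix.add_apply, mul_apply, Fin.sum_univ_three, smul_eq_mul, trace_fin_three, one_apply,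
      Nat.reduceAdd, Fin.reduceEq, one_ne_zero, zero_ne_one, ↓reduceIte, mul_zero, mul_one,
      add_zero] <;>
    rw [hx, hy] <;> ring

theorem trace_linearized_cayleyHamilton (x y : Matrix (Fin 3) (Fin 3) R)
    (hx : trace x = 0) (hy : trace y = 0) :
    2 * trace (x * (y * (x * y))) + 4 * trace (x * (x * (y * y))) =
      2 * trace (x * y) ^ 2 + trace (x * x) * trace (y * y) := by
  have h := congrArg (fun z => trace (x * z)) (linearized_cayleyHamilton x y hx hy)
  simp only [Matrix.mul_add, Matrix.mul_smul, trace_add, trace_smul, Matrix.mul_one, hx,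
    smul_eq_mul] at h
  have hcyc : trace (x * (y * (y * x))) = trace (x * (x * (y * y))) := by
    simpa only [Matrix.mul_assoc] using trace_mul_comm (x * y * y) x
  rw [hcyc] at h
  linear_combination h

end LinearizedCayleyHamilton

section OkuboProduct

variable {K : Type*} [Field K]

def okuboMul (m : K) (x y : Matrix (Fin 3) (Fin 3) K) : Matrix (Fin 3) (Fin 3) K :=
  m • (x * y) + (1 - m) • (y * x) - ((1 / 3 : K) * trace (x * y)) • 1

lemma okuboMul_one_sub (m : K) (x y : Matrix (Fin 3) (Fin 3) K) :
    okuboMul (1 - m) x y = okuboMul m y x := by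
  rw [okuboMul, okuboMul, sub_sub_cancel, trace_mul_comm, add_comm]

variable [CharZero K] {m : K}

theorem okuboMul_self_okuboMul (hm : 3 * m ^ 2 - 3 * m + 1 = 0) (x y : Matrix (Fin 3) (Fin 3) K)
    (hx : trace x = 0) (hy : trace y = 0) :
    okuboMul m y (okuboMul m x y) = (trace (y * y) / 6) • x := by
  have hk := linearized_cayleyHamilton x y hx hy
  have h₁ : trace (y * (x * y)) = trace (x * (y * y)) := by
    rw [trace_mul_comm, Matrix.mul_assoc]
  have h₂ : trace (y * (y * x)) = trace (x * (y * y)) := by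
    rw [← Matrix.mul_assoc, trace_mul_comm]
  simp only [okuboMul, Matrix.mul_add, Matrix.add_mul, Matrix.mul_sub, Matrix.sub_mul,
    Matrix.mul_smul, Matrix.smul_mul, Matrix.mul_one, Matrix.one_mul, Matrix.mul_assoc,
    trace_add, trace_sub, trace_smul, smul_eq_mul, hy, h₁, h₂, mul_zero, sub_zero]
  linear_combination (norm := module) (1 / 6 : K) • hk +
    hm • ((2 / 3 : K) • (y * (x * y)) - (1 / 3 : K) • (y * (y * x)) - (1 / 3 : K) • (x * (y * y)))

theorem okuboMul_okuboMul_self (hm : 3 * m ^ 2 - 3 * m + 1 = 0) (x y : Matrix (Fin 3) (Fin 3) K)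
    (hx : trace x = 0) (hy : trace y = 0) :
    okuboMul m (okuboMul m x y) x = (trace (x * x) / 6) • y := by
  have hm' : 3 * (1 - m) ^ 2 - 3 * (1 - m) + 1 = 0 := by linear_combination hm
  rw [← okuboMul_one_sub, ← okuboMul_one_sub m y x, okuboMul_self_okuboMul hm' y x hy hx]

theorem trace_okuboMul_mul_self (hm : 3 * m ^ 2 - 3 * m + 1 = 0) (x y : Matrix (Fin 3) (Fin 3) K)
    (hx : trace x = 0) (hy : trace y = 0) :
    trace (okuboMul m x y * okuboMul m x y) = trace (x * x) * trace (y * y) / 6 := by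
  have h₁ : trace (y * x) = trace (x * y) := trace_mul_comm _ _
  have h₂ : trace (y * (x * (y * x))) = trace (x * (y * (x * y))) := by
    rw [trace_mul_comm, Matrix.mul_assoc, Matrix.mul_assoc]
  have h₃ : trace (x * (y * (y * x))) = trace (x * (x * (y * y))) := by
    simpa only [Matrix.mul_assoc] using trace_mul_comm (x * y * y) x
  have h₄ : trace (y * (x * (x * y))) = trace (x * (x * (y * y))) := by
    rw [trace_mul_comm, Matrix.mul_assoc, Matrix.mul_assoc]
  simp only [okuboMul, Matrix.mul_add, Matrix.add_mul, Matrix.mul_sub, Matrix.sub_mul,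
    Matrix.mul_smul, Matrix.smul_mul, Matrix.mul_one, Matrix.one_mul, Matrix.mul_assoc,
    trace_add, trace_sub, trace_smul, trace_one, smul_eq_mul, h₁, h₂, h₃, h₄,
    Fintype.card_fin, Nat.cast_ofNat]
  linear_combination (1 / 6 : K) * trace_linearized_cayleyHamilton x y hx hy +
    (2 / 3 : K) * (trace (x * (y * (x * y))) - trace (x * (x * (y * y)))) * hm

end OkuboProduct

lemma okMu_conj : (starRingEnd ℂ) okMu = 1 - okMu := by
  simp only [okMu, map_div₀, map_add, map_mul, map_ofNat, conj_ofReal, conj_I]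
  ring

lemma okMu_root : 3 * okMu ^ 2 - 3 * okMu + 1 = 0 := by
  have h3 : ((Real.sqrt 3 : ℝ) : ℂ) ^ 2 = 3 := by
    rw [← ofReal_pow, Real.sq_sqrt zero_le_three]; norm_num
  rw [okMu]
  linear_combination I ^ 2 / 12 * h3 + (1 / 4 : ℂ) * I_sq

lemma omul_eq_okuboMul : omul = okuboMul okMu := by
  ext1 x; ext1 y; rw [omul, okuboMul, okMu_conj]

lemma ofReal_onorm {x : M3} (hx : x.IsHermitian) : (onorm x : ℂ) = trace (x * x) / 6 := by
  have hreal : ((trace (x * x)).re : ℂ) = trace (x * x) := by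
    rw [← conj_eq_iff_re, ← star_def, ← trace_conjTranspose, conjTranspose_mul, hx.eq]
  rw [onorm, ofReal_mul, hreal]
  push_cast; ring

/-- For every `x, y ∈ 𝒪`, the vector
`(x, y, x*y; n(y), n(x), 1)` is a Veronese vector. -/
theorem okubo_paper_stmt13 :
    ∀ x ∈ Okubo, ∀ y ∈ Okubo,
      IsVeronese x y (omul x y) (onorm y) (onorm x) 1 := by
  rintro x ⟨hxH, hx⟩ y ⟨hyH, hy⟩
  simp only [IsVeronese, omul_eq_okuboMul]
  refine ⟨?_, ?_, one_smul ℝ _, (mul_one _).symm, (one_mul _).symm, ?_⟩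
  · rw [← Complex.coe_smul, ofReal_onorm hyH, okuboMul_self_okuboMul okMu_root x y hx hy]
  · rw [← Complex.coe_smul, ofReal_onorm hxH, okuboMul_okuboMul_self okMu_root x y hx hy]
  · have hxx : trace (x * x) = 6 * onorm x := by rw [ofReal_onorm hxH]; ring
    have hyy : trace (y * y) = 6 * onorm y := by rw [ofReal_onorm hyH]; ring
    rw [onorm, trace_okuboMul_mul_self okMu_root x y hx hy, hxx, hyy]
    norm_cast
    ring

end
end
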